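/- Let F be an algebraically closed field of characteristic different from 2 and let l ≥ 2. Then the normalizer of T̄ in O_J is the internal semidirect product of T̄ by V̄; that is: V̄ ⊆ N_{O_J}(T̄), T̄ ∩ V̄ = {1}, and every element of N_{O_J}(T̄) can be written as t·v with t ∈ T̄ and v ∈ V̄. -/

import Mathlib

open Matrix

noncomputable section

variable (n : ℕ) (F : Type) [Field F]

/-- The antidiagonal matrix `J`: entry `(i,j)` (1-based) is `1` iff `i + j = n + 1`. -/
def Jmat : Matrix (Fin n) (Fin n) F :=
  Matrix.of fun i j => if (i : ℕ) + (j : ℕ) + 1 = n then 1 else 0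

/-- The permutation `ι` of `{1,…,n}` given (1-based) by `i ↦ n + 1 - i`. -/
def iotaPerm : Equiv.Perm (Fin n) where
  toFun i := ⟨n - 1 - (i : ℕ), by have := i.isLt; omega⟩
  invFun i := ⟨n - 1 - (i : ℕ), by have := i.isLt; omega⟩
  left_inv i := by have := i.isLt; apply Fin.ext; show n - 1 - (n - 1 - (i : ℕ)) = _; omega
  right_inv i := by have := i.isLt; apply Fin.ext; show n - 1 - (n - 1 - (i : ℕ)) = _; omega

/-- The permutation matrix `P_σ`, with `(i,j)` entry `1` iff `i = σ j`. -/
def permMat (σ : Equiv.Perm (Fin n)) : Matrix (Fin n) (Fin n) F :=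
  Matrix.of fun i j => if i = σ j then 1 else 0

lemma permMat_mul (σ τ : Equiv.Perm (Fin n)) :
    permMat n F σ * permMat n F τ = permMat n F (σ * τ) := by
  ext i j
  simp only [permMat, Matrix.mul_apply, Matrix.of_apply]
  rw [Finset.sum_eq_single (τ j)]
  · simp [Equiv.Perm.mul_apply] <;> (split_ifs <;> simp_all)
  · intro k _ hk; simp [hk]
  · intro h; simp at h

lemma permMat_one : permMat n F 1 = 1 := by
  ext i j
  simp [permMat, Matrix.one_apply] <;> (split_ifs <;> simp_all)

/-- The permutation matrix `P_σ` as an element of `GL_n(F)`. -/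
def permGL (σ : Equiv.Perm (Fin n)) : GL (Fin n) F :=
  ⟨permMat n F σ, permMat n F σ⁻¹,
    by rw [permMat_mul]; simp [permMat_one],
    by rw [permMat_mul]; simp [permMat_one]⟩

/-- The orthogonal group `O_J = {x ∈ GL_n(F) : xᵀ J x = J}` as a subgroup of `GL_n(F)`. -/
def OJ : Subgroup (GL (Fin n) F) where
  carrier := {x | (x : Matrix (Fin n) (Fin n) F)ᵀ * Jmat n F * (x : Matrix (Fin n) (Fin n) F) = Jmat n F}
  one_mem' := by simp
  mul_mem' := by
    intro a b ha hb
    simp only [Set.mem_setOf_eq] at ha hb ⊢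
    rw [Units.val_mul, transpose_mul]
    calc (b : Matrix (Fin n) (Fin n) F)ᵀ * (a : Matrix (Fin n) (Fin n) F)ᵀ * Jmat n F *
          ((a : Matrix (Fin n) (Fin n) F) * (b : Matrix (Fin n) (Fin n) F))
        = (b : Matrix (Fin n) (Fin n) F)ᵀ *
            ((a : Matrix (Fin n) (Fin n) F)ᵀ * Jmat n F * (a : Matrix (Fin n) (Fin n) F)) *
            (b : Matrix (Fin n) (Fin n) F) := by noncomm_ring
      _ = Jmat n F := by rw [ha, hb]
  inv_mem' := by
    intro a ha
    simp only [Set.mem_setOf_eq] at ha ⊢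
    calc ((a⁻¹ : GL (Fin n) F) : Matrix (Fin n) (Fin n) F)ᵀ * Jmat n F *
          ((a⁻¹ : GL (Fin n) F) : Matrix (Fin n) (Fin n) F)
        = ((a⁻¹ : GL (Fin n) F) : Matrix (Fin n) (Fin n) F)ᵀ *
            ((a : Matrix (Fin n) (Fin n) F)ᵀ * Jmat n F * (a : Matrix (Fin n) (Fin n) F)) *
            ((a⁻¹ : GL (Fin n) F) : Matrix (Fin n) (Fin n) F) := by rw [ha]
      _ = ((a : Matrix (Fin n) (Fin n) F) * ((a⁻¹ : GL (Fin n) F) : Matrix (Fin n) (Fin n) F))ᵀ *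
            Jmat n F *
            ((a : Matrix (Fin n) (Fin n) F) * ((a⁻¹ : GL (Fin n) F) : Matrix (Fin n) (Fin n) F)) := by
          rw [transpose_mul]; noncomm_ring
      _ = Jmat n F := by rw [Units.mul_inv]; simp

/-- `SL_n(F)` viewed as a subgroup of `GL_n(F)`. -/
def SLgl : Subgroup (GL (Fin n) F) where
  carrier := {x | (x : Matrix (Fin n) (Fin n) F).det = 1}
  one_mem' := by simp
  mul_mem' := by
    intro a b ha hb
    simp only [Set.mem_setOf_eq] at ha hb ⊢
    rw [Units.val_mul, det_mul, ha, hb, one_mul]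
  inv_mem' := by
    intro a ha
    simp only [Set.mem_setOf_eq] at ha ⊢
    have h : ((a : Matrix (Fin n) (Fin n) F) * ((a⁻¹ : GL (Fin n) F) : Matrix (Fin n) (Fin n) F)).det = 1 := by
      rw [Units.mul_inv]; simp
    rw [det_mul, ha, one_mul] at h
    exact h

/-- `SO_J := O_J ∩ SL_n(F)`. -/
def SOJ : Subgroup (GL (Fin n) F) := OJ n F ⊓ SLgl n F

/-- The diagonal matrices lying in a subgroup `G` of `GL_n(F)` form a subgroup. -/
def diagIn (G : Subgroup (GL (Fin n) F)) : Subgroup (GL (Fin n) F) where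
  carrier := {x | x ∈ G ∧ (x : Matrix (Fin n) (Fin n) F).IsDiag}
  one_mem' := ⟨one_mem _, Matrix.isDiag_one⟩
  mul_mem' := by
    rintro a b ⟨haG, haD⟩ ⟨hbG, hbD⟩
    refine ⟨mul_mem haG hbG, ?_⟩
    rw [Units.val_mul, ← haD.diagonal_diag, ← hbD.diagonal_diag, diagonal_mul_diagonal]
    exact isDiag_diagonal _
  inv_mem' := by
    rintro a ⟨haG, haD⟩
    refine ⟨inv_mem haG, ?_⟩
    rw [Matrix.coe_units_inv, ← haD.diagonal_diag, inv_diagonal]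
    exact isDiag_diagonal _

/-- `T̄`, the subgroup of all diagonal matrices contained in `O_J`. -/
def Tbar : Subgroup (GL (Fin n) F) := diagIn n F (OJ n F)

/-- `V̄ = {P_σ : σ ∘ ι = ι ∘ σ}` as a subgroup of `GL_n(F)`. -/
def Vbar : Subgroup (GL (Fin n) F) where
  carrier := {x | ∃ σ : Equiv.Perm (Fin n),
      σ * iotaPerm n = iotaPerm n * σ ∧ (x : Matrix (Fin n) (Fin n) F) = permMat n F σ}
  one_mem' := ⟨1, by simp, by simp [permMat_one]⟩
  mul_mem' := by
    rintro a b ⟨σ, hσ, ha⟩ ⟨τ, hτ, hb⟩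
    refine ⟨σ * τ, ?_, ?_⟩
    · rw [mul_assoc, hτ, ← mul_assoc, hσ, mul_assoc]
    · rw [Units.val_mul, ha, hb, permMat_mul]
  inv_mem' := by
    rintro a ⟨σ, hσ, ha⟩
    have hau : a = permGL n F σ := Units.ext ha
    exact ⟨σ⁻¹, (Commute.inv_left hσ : _), by rw [hau]; rfl⟩

/-- `W̄ := V̄ ∩ SL_n(F)`. -/
def Wbar : Subgroup (GL (Fin n) F) := Vbar n F ⊓ SLgl n F

end

/-!
A matrix `x` normalizing the diagonal torus `T̄` satisfies `x t = d x` with `t, d` diagonal, so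
`x i j ≠ 0` forces `t j = d i`. For `j ≠ j'` there is `t ∈ T̄` with `t j ≠ t j'` (take `a` at `j`
and `a⁻¹` at `ι j`, where `a ∉ {0, 1, -1}`; this uses that `ι` has no fixed point), so every row of
`x` has exactly one nonzero entry and `x` is a monomial matrix `d · P_σ`. Reading `xᵀ J x = J` at the
entries `(i, ι i)` shows that `σ` commutes with `ι`, so `P_σ ∈ V̄ ⊆ O_J` and `x P_σ⁻¹ ∈ T̄`.
-/

theorem Matrix.exists_perm_eq_of_apply_ne_zero {ι R : Type*} [Fintype ι] [DecidableEq ι]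
    [CommRing R] {X : Matrix ι ι R} (hX : X.det ≠ 0)
    (hrow : ∀ i j j', X i j ≠ 0 → X i j' ≠ 0 → j = j') :
    ∃ σ : Equiv.Perm ι, ∀ i j, X i j ≠ 0 → i = σ j := by
  have hrow_ne : ∀ i, ∃ j, X i j ≠ 0 := by
    by_contra! h
    obtain ⟨i, hi⟩ := h
    exact hX (det_eq_zero_of_row_eq_zero i hi)
  choose τ hτ using hrow_ne
  have hsurj : Function.Surjective τ := by
    intro j
    by_contra! h
    refine hX (det_eq_zero_of_column_eq_zero j fun i => ?_)
    by_contra hij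
    exact h i (hrow i _ _ (hτ i) hij)
  let e := Equiv.ofBijective τ ⟨Finite.injective_iff_surjective.mpr hsurj, hsurj⟩
  exact ⟨e.symm, fun i j hij => e.eq_symm_apply.mpr (hrow i _ _ (hτ i) hij)⟩

theorem Matrix.GeneralLinearGroup.diag_eq_of_conj_isDiag {ι K : Type*} [Fintype ι]
    [DecidableEq ι] [Field K] {x t : GL ι K} (ht : (t : Matrix ι ι K).IsDiag)
    (hxt : ((x * t * x⁻¹ : GL ι K) : Matrix ι ι K).IsDiag) {i j : ι}
    (hij : (x : Matrix ι ι K) i j ≠ 0) :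
    (t : Matrix ι ι K) j j = ((x * t * x⁻¹ : GL ι K) : Matrix ι ι K) i i := by
  have hcomm : (x : Matrix ι ι K) * t = ((x * t * x⁻¹ : GL ι K) : Matrix ι ι K) * x := by
    rw [← Units.val_mul, ← Units.val_mul, inv_mul_cancel_right]
  have h := congr_fun₂ hcomm i j
  rw [← ht.diagonal_diag, ← hxt.diagonal_diag, mul_diagonal, diagonal_mul] at h
  exact mul_left_cancel₀ hij (h.trans (mul_comm _ _))

section

variable {n : ℕ} {F : Type} [Field F]

lemma iotaPerm_apply_val (i : Fin n) : (iotaPerm n i : ℕ) = n - 1 - i := rfl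

lemma iotaPerm_iotaPerm (i : Fin n) : iotaPerm n (iotaPerm n i) = i :=
  (iotaPerm n).symm_apply_apply i

lemma iotaPerm_ne_self {l : ℕ} (i : Fin (2 * l)) : iotaPerm (2 * l) i ≠ i := by
  intro h
  have := congrArg Fin.val h
  rw [iotaPerm_apply_val] at this
  omega

lemma permMat_apply (σ : Equiv.Perm (Fin n)) (i j : Fin n) :
    permMat n F σ i j = if i = σ j then 1 else 0 := rfl

lemma mul_permMat_apply (M : Matrix (Fin n) (Fin n) F) (σ : Equiv.Perm (Fin n)) (i j : Fin n) :
    (M * permMat n F σ) i j = M i (σ j) := by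
  rw [mul_apply, Finset.sum_eq_single (σ j)] <;> simp +contextual [permMat_apply]

lemma permMat_mul_apply (M : Matrix (Fin n) (Fin n) F) (σ : Equiv.Perm (Fin n)) (i j : Fin n) :
    (permMat n F σ * M) i j = M (σ⁻¹ i) j := by
  rw [mul_apply, Finset.sum_eq_single (σ⁻¹ i)]
  · simp [permMat_apply]
  · intro b _ hb
    rw [permMat_apply, if_neg fun h => hb (by simp [h]), zero_mul]
  · simp

lemma permMat_transpose (σ : Equiv.Perm (Fin n)) : (permMat n F σ)ᵀ = permMat n F σ⁻¹ := by
  ext i j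
  simp only [transpose_apply, permMat_apply, eq_comm, Equiv.Perm.eq_inv_iff_eq]

lemma Jmat_eq_permMat : Jmat n F = permMat n F (iotaPerm n) := by
  ext i j
  have := j.isLt
  simp only [Jmat, of_apply, permMat_apply, Fin.ext_iff, iotaPerm_apply_val]
  exact if_congr (by omega) rfl rfl

lemma isDiag_permMat_iff (σ : Equiv.Perm (Fin n)) : (permMat n F σ).IsDiag ↔ σ = 1 := by
  refine ⟨fun h => Equiv.ext fun j => ?_, fun h => h ▸ permMat_one n F ▸ isDiag_one⟩
  by_contra hj
  simpa [permMat_apply] using h hj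

lemma isDiag_mul_permMat_inv {X : Matrix (Fin n) (Fin n) F} {σ : Equiv.Perm (Fin n)}
    (hσ : ∀ i j, X i j ≠ 0 → i = σ j) : (X * permMat n F σ⁻¹).IsDiag := by
  intro i j hij
  rw [mul_permMat_apply]
  by_contra h
  exact hij (by simpa using hσ _ _ h)

lemma mem_OJ_of_diagonal {t : GL (Fin n) F} {c : Fin n → F} (ht : (t : Matrix _ _ F) = diagonal c)
    (hc : ∀ i, c i * c (iotaPerm n i) = 1) : t ∈ OJ n F := by
  show (t : Matrix (Fin n) (Fin n) F)ᵀ * Jmat n F * (t : Matrix (Fin n) (Fin n) F) = Jmat n F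
  ext i j
  rw [ht, diagonal_transpose, mul_diagonal, diagonal_mul, Jmat_eq_permMat, permMat_apply]
  split_ifs with h
  · rw [h, mul_one]
    simpa [iotaPerm_iotaPerm] using hc (iotaPerm n j)
  · simp

lemma exists_mem_Tbar_of_mul_iotaPerm_eq_one {c : Fin n → F}
    (hc : ∀ i, c i * c (iotaPerm n i) = 1) :
    ∃ t ∈ Tbar n F, (t : Matrix _ _ F) = diagonal c := by
  have hunit : IsUnit (diagonal c) :=
    isUnit_diagonal.mpr (Pi.isUnit_iff.mpr fun i => IsUnit.of_mul_eq_one _ (hc i))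
  refine ⟨hunit.unit, ⟨mem_OJ_of_diagonal hunit.unit_spec hc, ?_⟩, hunit.unit_spec⟩
  rw [hunit.unit_spec]
  exact isDiag_diagonal c

lemma exists_mem_Tbar_diag_ne [Infinite F] {l : ℕ} {j j' : Fin (2 * l)} (hjj' : j ≠ j') :
    ∃ t ∈ Tbar (2 * l) F,
      (t : Matrix (Fin (2 * l)) (Fin (2 * l)) F) j j ≠ (t : Matrix (Fin (2 * l)) (Fin (2 * l)) F) j' j' := by
  classical
  obtain ⟨a, ha⟩ := Infinite.exists_notMem_finset ({0, 1, -1} : Finset F)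
  simp only [Finset.mem_insert, Finset.mem_singleton, not_or] at ha
  obtain ⟨ha0, ha1, ha2⟩ := ha
  set ι := iotaPerm (2 * l)
  have hιι : ∀ i, ι (ι i) = i := iotaPerm_iotaPerm
  have hι : ι j ≠ j := iotaPerm_ne_self j
  let c : Fin (2 * l) → F := fun i => if i = j then a else if i = ι j then a⁻¹ else 1
  have hc : ∀ i, c i * c (ι i) = 1 := by
    intro i
    by_cases hij : i = j
    · simp [c, hij, hι, ha0]
    by_cases hiιj : i = ι j
    · simp [c, hiιj, hι, hιι, ha0]
    have h1 : ι i ≠ j := fun h => hiιj (by rw [← h, hιι])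
    have h2 : ι i ≠ ι j := fun h => hij (ι.injective h)
    simp [c, hij, hiιj, h1, h2]
  obtain ⟨t, ht, htc⟩ := exists_mem_Tbar_of_mul_iotaPerm_eq_one hc
  refine ⟨t, ht, ?_⟩
  rw [htc, diagonal_apply_eq, diagonal_apply_eq]
  simp only [c, if_pos rfl, if_neg (Ne.symm hjj')]
  split_ifs
  · intro h
    have haa : a * a = 1 := by nth_rw 2 [h]; exact mul_inv_cancel₀ ha0
    rcases mul_self_eq_one_iff.mp haa with h1 | h1
    exacts [ha1 h1, ha2 h1]
  · exact ha1

lemma coe_permGL (σ : Equiv.Perm (Fin n)) :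
    (permGL n F σ : Matrix (Fin n) (Fin n) F) = permMat n F σ := rfl

lemma coe_permGL_inv (σ : Equiv.Perm (Fin n)) :
    (((permGL n F σ)⁻¹ : GL (Fin n) F) : Matrix (Fin n) (Fin n) F) = permMat n F σ⁻¹ := rfl

lemma mem_Vbar_iff {v : GL (Fin n) F} :
    v ∈ Vbar n F ↔ ∃ σ, σ * iotaPerm n = iotaPerm n * σ ∧ v = permGL n F σ :=
  exists_congr fun _ => and_congr_right fun _ => ⟨fun h => Units.ext h, fun h => h ▸ rfl⟩

lemma permGL_mem_OJ {σ : Equiv.Perm (Fin n)} (hσ : σ * iotaPerm n = iotaPerm n * σ) :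
    permGL n F σ ∈ OJ n F := by
  show (permMat n F σ)ᵀ * Jmat n F * permMat n F σ = Jmat n F
  rw [permMat_transpose, Jmat_eq_permMat, permMat_mul, permMat_mul, mul_assoc, ← hσ,
    inv_mul_cancel_left]

lemma Vbar_le_OJ : Vbar n F ≤ OJ n F := by
  intro v hv
  obtain ⟨σ, hσ, rfl⟩ := mem_Vbar_iff.mp hv
  exact permGL_mem_OJ hσ

lemma conj_mem_Tbar_of_mem_Vbar {v t : GL (Fin n) F} (hv : v ∈ Vbar n F) (ht : t ∈ Tbar n F) :
    v * t * v⁻¹ ∈ Tbar n F := by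
  refine ⟨mul_mem (mul_mem (Vbar_le_OJ hv) ht.1) (inv_mem (Vbar_le_OJ hv)), ?_⟩
  obtain ⟨σ, -, rfl⟩ := mem_Vbar_iff.mp hv
  intro i j hij
  rw [Units.val_mul, Units.val_mul, coe_permGL_inv, coe_permGL, mul_permMat_apply,
    permMat_mul_apply]
  exact ht.2 fun h => hij (σ⁻¹.injective h)

lemma Vbar_le_normalizer_Tbar : Vbar n F ≤ Subgroup.normalizer (Tbar n F : Set (GL (Fin n) F)) := by
  intro v hv
  refine Subgroup.mem_normalizer_iff.mpr fun t => ⟨conj_mem_Tbar_of_mem_Vbar hv, fun ht => ?_⟩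
  simpa [mul_assoc] using conj_mem_Tbar_of_mem_Vbar (inv_mem hv) ht

lemma Tbar_inf_Vbar : Tbar n F ⊓ Vbar n F = ⊥ := by
  refine eq_bot_iff.mpr fun x ⟨⟨_, hdiag⟩, hv⟩ => ?_
  obtain ⟨σ, -, rfl⟩ := mem_Vbar_iff.mp hv
  rw [coe_permGL, isDiag_permMat_iff] at hdiag
  rw [Subgroup.mem_bot, hdiag]
  exact Units.ext (permMat_one n F)

lemma commute_iotaPerm_of_mem_OJ {x : GL (Fin n) F} (hx : x ∈ OJ n F) {σ : Equiv.Perm (Fin n)}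
    (hσ : ∀ i j, (x : Matrix (Fin n) (Fin n) F) i j ≠ 0 → i = σ j) :
    σ * iotaPerm n = iotaPerm n * σ := by
  set X := (x : Matrix (Fin n) (Fin n) F)
  ext i
  have hJ : (Xᵀ * Jmat n F * X) i (iotaPerm n i) = 1 := by
    rw [show Xᵀ * Jmat n F * X = Jmat n F from hx, Jmat_eq_permMat, permMat_apply,
      if_pos (iotaPerm_iotaPerm i).symm]
  rw [mul_apply, Finset.sum_eq_single (iotaPerm n (σ i)), Jmat_eq_permMat, mul_permMat_apply,
    transpose_apply, iotaPerm_iotaPerm] at hJ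
  · exact congrArg Fin.val (hσ _ _ (right_ne_zero_of_mul_eq_one hJ)).symm
  · intro a _ ha
    rw [Jmat_eq_permMat, mul_permMat_apply, transpose_apply]
    by_contra h
    exact ha (by rw [← hσ _ _ (left_ne_zero_of_mul h), iotaPerm_iotaPerm])
  · simp

end

section

variable {F : Type} [Field F] [Infinite F] {l : ℕ}

lemma eq_of_apply_ne_zero_of_mem_normalizer_Tbar {x : GL (Fin (2 * l)) F}
    (hx : x ∈ Subgroup.normalizer (Tbar (2 * l) F : Set (GL (Fin (2 * l)) F)))
    {i j j' : Fin (2 * l)} (hj : (x : Matrix (Fin (2 * l)) (Fin (2 * l)) F) i j ≠ 0)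
    (hj' : (x : Matrix (Fin (2 * l)) (Fin (2 * l)) F) i j' ≠ 0) : j = j' := by
  by_contra hjj'
  obtain ⟨t, ht, hne⟩ := exists_mem_Tbar_diag_ne (F := F) hjj'
  have hconj := ((Subgroup.mem_normalizer_iff.mp hx t).mp ht).2
  exact hne ((GeneralLinearGroup.diag_eq_of_conj_isDiag ht.2 hconj hj).trans
    (GeneralLinearGroup.diag_eq_of_conj_isDiag ht.2 hconj hj').symm)

lemma exists_mem_Tbar_mem_Vbar_eq_mul {x : GL (Fin (2 * l)) F} (hxO : x ∈ OJ (2 * l) F)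
    (hxN : x ∈ Subgroup.normalizer (Tbar (2 * l) F : Set (GL (Fin (2 * l)) F))) :
    ∃ t ∈ Tbar (2 * l) F, ∃ v ∈ Vbar (2 * l) F, x = t * v := by
  obtain ⟨σ, hσ⟩ := exists_perm_eq_of_apply_ne_zero (x.isUnit.map detMonoidHom).ne_zero
    fun i j j' => eq_of_apply_ne_zero_of_mem_normalizer_Tbar hxN
  have hcomm := commute_iotaPerm_of_mem_OJ hxO hσ
  refine ⟨x * (permGL _ F σ)⁻¹, ⟨mul_mem hxO (inv_mem (permGL_mem_OJ hcomm)), ?_⟩,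
    permGL _ F σ, mem_Vbar_iff.mpr ⟨σ, hcomm, rfl⟩, (inv_mul_cancel_right x _).symm⟩
  rw [Units.val_mul, coe_permGL_inv]
  exact isDiag_mul_permMat_inv hσ

end

theorem normalizer_Tbar_in_OJ_eq_Tbar_mul_Vbar_general
    (F : Type) [Field F] [IsAlgClosed F]
    (l : ℕ) :
    Vbar (2 * l) F ≤ OJ (2 * l) F ⊓ Subgroup.normalizer (Tbar (2 * l) F : Set (GL (Fin (2 * l)) F)) ∧
    Tbar (2 * l) F ⊓ Vbar (2 * l) F = ⊥ ∧
    ∀ x ∈ OJ (2 * l) F ⊓ Subgroup.normalizer (Tbar (2 * l) F : Set (GL (Fin (2 * l)) F)),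
      ∃ t ∈ Tbar (2 * l) F, ∃ v ∈ Vbar (2 * l) F, x = t * v :=
  ⟨fun _ hv => ⟨Vbar_le_OJ hv, Vbar_le_normalizer_Tbar hv⟩, Tbar_inf_Vbar,
    fun _ hx => exists_mem_Tbar_mem_Vbar_eq_mul hx.1 hx.2⟩

/-- For `F` algebraically closed of characteristic `≠ 2` and `l ≥ 2`,
the normalizer of `T̄` in `O_J` is the internal semidirect product of `T̄` by `V̄`. -/
theorem normalizer_Tbar_in_OJ_eq_Tbar_mul_Vbar
    (F : Type) [Field F] [IsAlgClosed F] (hchar : ringChar F ≠ 2)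
    (l : ℕ) (hl : 2 ≤ l) :
    Vbar (2 * l) F ≤ OJ (2 * l) F ⊓ Subgroup.normalizer (Tbar (2 * l) F : Set (GL (Fin (2 * l)) F)) ∧
    Tbar (2 * l) F ⊓ Vbar (2 * l) F = ⊥ ∧
    ∀ x ∈ OJ (2 * l) F ⊓ Subgroup.normalizer (Tbar (2 * l) F : Set (GL (Fin (2 * l)) F)),
      ∃ t ∈ Tbar (2 * l) F, ∃ v ∈ Vbar (2 * l) F, x = t * v :=
  normalizer_Tbar_in_OJ_eq_Tbar_mul_Vbar_general F l
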